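/- arXiv:1611.01618 — 6 statements merged into one kernel-verified Lean document; each statement's English description precedes it below -/
import Mathlib

section
/- Assume in addition r ≥ 1 and z ≥ 1, and let N'_i = A'·u₁^i + B'·u₂^i with A' = (√v − (d−1))/(2√v) and B' = (√v + (d−1))/(2√v). Then for every integer k ≥ 2, one has 2·∑_{i=0}^{k−1} N'_i = 2·(A·(u₁^{k+1} − u₁)/(u₁² − 1) + B·(u₂^{k+1} − u₂)/(u₂² − 1)); that is, hanging a mixed bipartite Moore graph from an edge yields the same Moore bound. -/
/-!
Both sides split along the two roots `u₁, u₂` of `x² - (d-1)x - z`. For each root `u` the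
coefficients satisfy `A u = A' (u + 1)` (resp. `B u = B' (u + 1)`), which turns the closed form
`A (u^(k+1) - u) / (u² - 1)` into the geometric sum `A' (u^k - 1) / (u - 1)`. The roots avoid
`±1` because the quadratic takes the values `2 - r - 2z < 0` at `1` and `r > 0` at `-1`.
-/

theorem sub_mul_sub_half_roots (d z s c : ℝ) (hs : s ^ 2 = (d - 1) ^ 2 + 4 * z) :
    (c - (d - 1 - s) / 2) * (c - (d - 1 + s) / 2) = c ^ 2 - (d - 1) * c - z := by
  linear_combination (-1 / 4 : ℝ) * hs

theorem geom_sum_mul_eq_of_mul_eq {u a a' : ℝ} (h₁ : u ≠ 1) (h₂ : u ≠ -1)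
    (h : a * u = a' * (u + 1)) (k : ℕ) :
    ∑ i ∈ Finset.range k, a' * u ^ i = a * (u ^ (k + 1) - u) / (u ^ 2 - 1) := by
  have hm : u - 1 ≠ 0 := sub_ne_zero.mpr h₁
  have hp : u + 1 ≠ 0 := by rwa [← sub_neg_eq_add, sub_ne_zero]
  have hsq : u ^ 2 - 1 = (u - 1) * (u + 1) := by ring
  rw [← Finset.mul_sum, geom_sum_eq h₁, hsq, pow_succ]
  field_simp
  linear_combination -(u ^ k - 1) * h

theorem stmt_4 (r z d v u₁ u₂ A B A' B' : ℝ)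
    (hr : r ≥ 1) (hz : z ≥ 1)
    (hd : d = r + z) (hv : v = (d - 1)^2 + 4*z) (hvpos : v > 0)
    (hu1 : u₁ = (d - 1 - Real.sqrt v) / 2) (hu2 : u₂ = (d - 1 + Real.sqrt v) / 2)
    (hA : A = (Real.sqrt v - (d + 1)) / (2 * Real.sqrt v))
    (hB : B = (Real.sqrt v + (d + 1)) / (2 * Real.sqrt v))
    (hA' : A' = (Real.sqrt v - (d - 1)) / (2 * Real.sqrt v))
    (hB' : B' = (Real.sqrt v + (d - 1)) / (2 * Real.sqrt v))
    (N' : ℕ → ℝ) (hN' : ∀ i : ℕ, N' i = A' * u₁ ^ i + B' * u₂ ^ i) :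
    ∀ k : ℕ, 2 ≤ k →
      2 * ∑ i ∈ Finset.range k, N' i =
        2 * (A * (u₁ ^ (k + 1) - u₁) / (u₁^2 - 1) + B * (u₂ ^ (k + 1) - u₂) / (u₂^2 - 1)) := by
  intro k _
  have hs : Real.sqrt v ^ 2 = (d - 1) ^ 2 + 4 * z := by rw [Real.sq_sqrt hvpos.le, hv]
  have at_one : (1 - u₁) * (1 - u₂) ≠ 0 := by
    rw [hu1, hu2, sub_mul_sub_half_roots d z _ 1 hs]; linarith
  have at_neg_one : (-1 - u₁) * (-1 - u₂) ≠ 0 := by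
    rw [hu1, hu2, sub_mul_sub_half_roots d z _ (-1) hs]; linarith
  obtain ⟨h₁, h₂⟩ := mul_ne_zero_iff.mp at_one
  obtain ⟨h₁', h₂'⟩ := mul_ne_zero_iff.mp at_neg_one
  have hAu : A * u₁ = A' * (u₁ + 1) := by rw [hA, hA', hu1]; ring
  have hBu : B * u₂ = B' * (u₂ + 1) := by rw [hB, hB', hu2]; ring
  rw [← geom_sum_mul_eq_of_mul_eq (sub_ne_zero.mp h₁).symm (sub_ne_zero.mp h₁').symm hAu,
    ← geom_sum_mul_eq_of_mul_eq (sub_ne_zero.mp h₂).symm (sub_ne_zero.mp h₂').symm hBu,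
    ← Finset.sum_add_distrib]
  simp only [hN']
end

section
/- Let r, z ≥ 1 and k ≥ 2 be integers, and let G be a bipartite mixed graph on a finite vertex set V that is totally regular with degrees (r, z) and has diameter at most k. Then (card V : ℝ) ≤ M_B(r, z, k) = 2·(A·(u₁^{k+1} − u₁)/(u₁² − 1) + B·(u₂^{k+1} − u₂)/(u₂² − 1)). -/
/-- A mixed graph is given by an adjacency matrix with entries in `{0,1}`
and zero diagonal. -/
def IsMixedGraph {V : Type*} (Adj : Matrix V V ℕ) : Prop :=
  (∀ u v : V, Adj u v ≤ 1) ∧ (∀ u : V, Adj u u = 0)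

/-- Totally regular with degrees `(r, z)`: every vertex has `r` neighbors by an edge,
out-degree `z` and in-degree `z` by arcs. -/
def IsTotallyRegular {V : Type*} [Fintype V] (Adj : Matrix V V ℕ) (r z : ℕ) : Prop :=
  ∀ u : V,
    (Finset.univ.filter fun v => Adj u v = 1 ∧ Adj v u = 1).card = r ∧
    (Finset.univ.filter fun v => Adj u v = 1 ∧ Adj v u = 0).card = z ∧
    (Finset.univ.filter fun v => Adj v u = 1 ∧ Adj u v = 0).card = z

/-- Bipartite mixed graph. -/
def IsBipartiteMixed {V : Type*} (Adj : Matrix V V ℕ) : Prop :=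
  ∃ c : V → Bool, ∀ u v : V, Adj u v ≠ 0 → c u ≠ c v

/-- Diameter at most `k`: every ordered pair is joined by a walk of length at most `k`. -/
def DiamAtMost {V : Type*} [Fintype V] [DecidableEq V] (Adj : Matrix V V ℕ) (k : ℕ) : Prop :=
  ∀ u v : V, 0 < (∑ i ∈ Finset.range (k + 1), Adj ^ i) u v

/-- Diameter exactly `k`. -/
def DiamExactly {V : Type*} [Fintype V] [DecidableEq V] (Adj : Matrix V V ℕ) (k : ℕ) : Prop :=
  DiamAtMost Adj k ∧ ∃ u v : V, (∑ i ∈ Finset.range k, Adj ^ i) u v = 0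

/-- The Moore-like bound for bipartite mixed graphs with degrees `(r, z)` and diameter `k`. -/
noncomputable def mooreBoundBip (r z k : ℕ) : ℝ :=
  let d : ℝ := (r : ℝ) + (z : ℝ)
  let v : ℝ := (d - 1)^2 + 4 * (z : ℝ)
  let u₁ : ℝ := (d - 1 - Real.sqrt v) / 2
  let u₂ : ℝ := (d - 1 + Real.sqrt v) / 2
  let A : ℝ := (Real.sqrt v - (d + 1)) / (2 * Real.sqrt v)
  let B : ℝ := (Real.sqrt v + (d + 1)) / (2 * Real.sqrt v)
  2 * (A * (u₁ ^ (k + 1) - u₁) / (u₁^2 - 1) + B * (u₂ ^ (k + 1) - u₂) / (u₂^2 - 1))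

/-!
Fix a vertex `u` and let `N i` be the number of vertices at distance exactly `i` from `u`.
A vertex at distance `i + 1` with an out-neighbour at distance `i` has at most `r + z - 1`
out-neighbours at distance `i + 2`, and at most `z * N i` vertices at distance `i + 1` have no
such out-neighbour, since each is the head of an arc from distance `i`. Hence
`N (i + 2) ≤ (r + z - 1) * N (i + 1) + z * N i`, and `N i ≤ mooreSeq r z i`.
Double counting arcs shows that the two colour classes have the same size, and the class whose
distances from `u` have parity opposite to `k` lies at distances `i ≤ k` with `i + k` odd.
So `|V| ≤ 2 * ∑ mooreSeq r z i` over those `i`, and this sum is `mooreBoundBip r z k` because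
`mooreSeq r z i = A * u₁ ^ i + B * u₂ ^ i` with `u₁, u₂` the roots of `x ^ 2 = (r + z - 1) * x + z`.
-/

open Finset

def mooreSeq (r z : ℕ) : ℕ → ℕ
  | 0 => 1
  | 1 => r + z
  | i + 2 => (r + z - 1) * mooreSeq r z (i + 1) + z * mooreSeq r z i

def oppParityRange (k : ℕ) : Finset ℕ := (range (k + 1)).filter fun i => Odd (i + k)

lemma mem_oppParityRange {i k : ℕ} : i ∈ oppParityRange k ↔ i ≤ k ∧ Odd (i + k) := by
  simp [oppParityRange]

lemma oppParityRange_zero : oppParityRange 0 = ∅ := by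
  decide

lemma oppParityRange_one : oppParityRange 1 = {0} := by
  decide

lemma oppParityRange_add_two (k : ℕ) :
    oppParityRange (k + 2) = insert (k + 1) (oppParityRange k) := by
  ext i
  simp only [mem_insert, mem_oppParityRange, Nat.odd_iff]
  omega

lemma succ_notMem_oppParityRange (k : ℕ) : k + 1 ∉ oppParityRange k := by
  simp [mem_oppParityRange]

lemma sum_oppParityRange_eq {u₁ u₂ A B : ℝ} {f : ℕ → ℝ} (hf : ∀ i, f i = A * u₁ ^ i + B * u₂ ^ i)
    (hu₁ : u₁ ^ 2 ≠ 1) (hu₂ : u₂ ^ 2 ≠ 1) (hAB : A * (u₂ + 1) + B * (u₁ + 1) = 0) (k : ℕ) :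
    ∑ i ∈ oppParityRange k, f i =
      A * (u₁ ^ (k + 1) - u₁) / (u₁ ^ 2 - 1) + B * (u₂ ^ (k + 1) - u₂) / (u₂ ^ 2 - 1) := by
  have h₁ : u₁ ^ 2 - 1 ≠ 0 := sub_ne_zero.mpr hu₁
  have h₂ : u₂ ^ 2 - 1 ≠ 0 := sub_ne_zero.mpr hu₂
  induction k using Nat.twoStepInduction with
  | zero => simp [oppParityRange_zero]
  | one =>
    rw [oppParityRange_one, sum_singleton, hf]
    field_simp
    linear_combination (u₁ - 1) * (u₂ - 1) * hAB
  | more k ih _ =>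
    rw [oppParityRange_add_two, sum_insert (succ_notMem_oppParityRange k), ih, hf]
    field_simp
    ring

lemma cast_mooreSeq_eq {r z : ℕ} (hd : 1 ≤ r + z) {u₁ u₂ A B : ℝ}
    (hu₁ : u₁ ^ 2 = (r + z - 1) * u₁ + z) (hu₂ : u₂ ^ 2 = (r + z - 1) * u₂ + z)
    (h₀ : A + B = 1) (h₁ : A * u₁ + B * u₂ = r + z) :
    ∀ i, (mooreSeq r z i : ℝ) = A * u₁ ^ i + B * u₂ ^ i
  | 0 => by simp [mooreSeq, h₀]
  | 1 => by simp [mooreSeq, h₁]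
  | i + 2 => by
    rw [mooreSeq, Nat.cast_add, Nat.cast_mul, Nat.cast_mul, Nat.cast_sub hd,
      cast_mooreSeq_eq hd hu₁ hu₂ h₀ h₁ i, cast_mooreSeq_eq hd hu₁ hu₂ h₀ h₁ (i + 1)]
    push_cast
    linear_combination -A * u₁ ^ i * hu₁ - B * u₂ ^ i * hu₂

lemma mooreBoundBip_eq_sum {r z : ℕ} (hr : 1 ≤ r) (hz : 1 ≤ z) (k : ℕ) :
    mooreBoundBip r z k = 2 * ∑ i ∈ oppParityRange k, (mooreSeq r z i : ℝ) := by
  have hr' : (1 : ℝ) ≤ r := by exact_mod_cast hr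
  have hz' : (1 : ℝ) ≤ z := by exact_mod_cast hz
  have hv : 0 < ((r + z : ℝ) - 1) ^ 2 + 4 * z := by positivity
  obtain ⟨s, hs, hs_pos, hs_sq⟩ : ∃ s, Real.sqrt (((r + z : ℝ) - 1) ^ 2 + 4 * z) = s ∧ 0 < s ∧
      s ^ 2 = ((r + z : ℝ) - 1) ^ 2 + 4 * z :=
    ⟨_, rfl, Real.sqrt_pos.mpr hv, Real.sq_sqrt hv.le⟩
  simp only [mooreBoundBip, hs]
  have hs_lt : s < r + z + 1 := by nlinarith
  have hs_gt : r + z - 1 < s := by nlinarith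
  have hu₁ : ((r + z - 1 - s) / 2) ^ 2 < (1 : ℝ) := by nlinarith
  have hu₂ : (1 : ℝ) < ((r + z - 1 + s) / 2) ^ 2 := by nlinarith
  have hclosed := cast_mooreSeq_eq (r := r) (z := z) (by omega)
    (u₁ := (r + z - 1 - s) / 2) (u₂ := (r + z - 1 + s) / 2)
    (A := (s - (r + z + 1)) / (2 * s)) (B := (s + (r + z + 1)) / (2 * s))
    (by linear_combination hs_sq / 4) (by linear_combination hs_sq / 4)
    (by field_simp; ring) (by field_simp; ring)
  rw [sum_oppParityRange_eq hclosed hu₁.ne hu₂.ne' (by field_simp; ring)]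

section Layers

variable {V : Type*} [Fintype V] {Adj : Matrix V V ℕ}

def outNeighbors (Adj : Matrix V V ℕ) (p : V) : Finset V := {q | 0 < Adj p q}

@[simp]
lemma mem_outNeighbors {p q : V} : q ∈ outNeighbors Adj p ↔ 0 < Adj p q := by
  simp [outNeighbors]

variable [DecidableEq V]

lemma pow_succ_apply_pos_iff (i : ℕ) (u w : V) :
    0 < (Adj ^ (i + 1)) u w ↔ ∃ q, 0 < (Adj ^ i) u q ∧ 0 < Adj q w := by
  simp [pow_succ, Matrix.mul_apply, sum_pos_iff]

def layer (Adj : Matrix V V ℕ) (u : V) (i : ℕ) : Finset V :=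
  {w | 0 < (Adj ^ i) u w ∧ ∀ j < i, (Adj ^ j) u w = 0}

lemma mem_layer {u w : V} {i : ℕ} :
    w ∈ layer Adj u i ↔ 0 < (Adj ^ i) u w ∧ ∀ j < i, (Adj ^ j) u w = 0 := by
  simp [layer]

lemma eq_of_mem_layer {u w : V} {i j : ℕ} (hi : w ∈ layer Adj u i) (hj : w ∈ layer Adj u j) :
    i = j := by
  rw [mem_layer] at hi hj
  by_contra h
  rcases Nat.lt_or_gt_of_ne h with h | h
  · exact (hj.2 i h ▸ hi.1).false
  · exact (hi.2 j h ▸ hj.1).false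

lemma layer_zero (u : V) : layer Adj u 0 = {u} := by
  ext w
  simp [mem_layer, Matrix.one_apply, eq_comm, apply_ite]

lemma exists_mem_layer {u w : V} {i : ℕ} (h : 0 < (Adj ^ i) u w) :
    ∃ j ≤ i, w ∈ layer Adj u j := by
  classical
  have hex : ∃ j, 0 < (Adj ^ j) u w := ⟨i, h⟩
  refine ⟨Nat.find hex, Nat.find_min' hex h, mem_layer.mpr ⟨Nat.find_spec hex, fun j hj => ?_⟩⟩
  simpa using Nat.find_min hex hj

lemma exists_mem_layer_adj_of_mem_layer_succ {u w : V} {i : ℕ} (hw : w ∈ layer Adj u (i + 1)) :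
    ∃ q ∈ layer Adj u i, w ∈ outNeighbors Adj q := by
  obtain ⟨q, hq, hqw⟩ := (pow_succ_apply_pos_iff i u w).mp (mem_layer.mp hw).1
  obtain ⟨j, hji, hj⟩ := exists_mem_layer hq
  obtain rfl : j = i := by
    by_contra hne
    have : 0 < (Adj ^ (j + 1)) u w :=
      (pow_succ_apply_pos_iff j u w).mpr ⟨q, (mem_layer.mp hj).1, hqw⟩
    exact this.ne' ((mem_layer.mp hw).2 (j + 1) (by omega))
  exact ⟨q, hj, mem_outNeighbors.mpr hqw⟩

end Layers

section MixedGraph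

variable {V : Type*} [Fintype V] [DecidableEq V] {Adj : Matrix V V ℕ} {r z : ℕ}

lemma card_outNeighbors (hA : ∀ u v, Adj u v ≤ 1) (hreg : IsTotallyRegular Adj r z) (p : V) :
    #(outNeighbors Adj p) = r + z := by
  obtain ⟨hr, hz, -⟩ := hreg p
  rw [← hr, ← hz, ← card_union_of_disjoint (disjoint_filter.mpr fun _ _ h h' => by omega)]
  congr 1
  ext w
  have := hA p w
  have := hA w p
  simp only [mem_outNeighbors, mem_filter, mem_univ, true_and, mem_union]
  omega

lemma card_layer_one_le (hA : ∀ u v, Adj u v ≤ 1) (hreg : IsTotallyRegular Adj r z) (u : V) :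
    #(layer Adj u 1) ≤ r + z := by
  rw [← card_outNeighbors hA hreg u]
  refine card_le_card fun w hw => ?_
  obtain ⟨q, hq, hqw⟩ := exists_mem_layer_adj_of_mem_layer_succ hw
  rw [layer_zero, mem_singleton] at hq
  rwa [← hq]

lemma card_layer_add_two_inter_outNeighbors_le (hA : ∀ u v, Adj u v ≤ 1)
    (hreg : IsTotallyRegular Adj r z) {u p : V} (i : ℕ) :
    #(layer Adj u (i + 2) ∩ outNeighbors Adj p) ≤
      r + z - 1 + if Disjoint (layer Adj u i) (outNeighbors Adj p) then 1 else 0 := by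
  split_ifs with hback
  · rw [← card_outNeighbors hA hreg p]
    exact (card_le_card inter_subset_right).trans (by omega)
  · obtain ⟨q, hq, hpq⟩ := not_disjoint_iff.mp hback
    have hsub : layer Adj u (i + 2) ∩ outNeighbors Adj p ⊆ (outNeighbors Adj p).erase q := by
      intro w hw
      rw [mem_inter] at hw
      refine mem_erase.mpr ⟨?_, hw.2⟩
      rintro rfl
      have := eq_of_mem_layer hq hw.1
      omega
    refine (card_le_card hsub).trans ?_
    rw [card_erase_of_mem hpq, card_outNeighbors hA hreg p]
    omega

lemma card_filter_layer_succ_disjoint_le (hA : ∀ u v, Adj u v ≤ 1)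
    (hreg : IsTotallyRegular Adj r z) (u : V) (i : ℕ) :
    #{p ∈ layer Adj u (i + 1) | Disjoint (layer Adj u i) (outNeighbors Adj p)} ≤
      z * #(layer Adj u i) := by
  have hsub : {p ∈ layer Adj u (i + 1) | Disjoint (layer Adj u i) (outNeighbors Adj p)} ⊆
      (layer Adj u i).biUnion fun q => {p | Adj q p = 1 ∧ Adj p q = 0} := by
    intro p hp
    rw [mem_filter] at hp
    obtain ⟨q, hq, hqp⟩ := exists_mem_layer_adj_of_mem_layer_succ hp.1
    have hpq := disjoint_left.mp hp.2 hq
    have := hA q p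
    simp only [mem_outNeighbors] at hqp hpq
    exact mem_biUnion.mpr ⟨q, hq, by simp only [mem_filter_univ]; omega⟩
  refine (card_le_card hsub).trans (card_biUnion_le.trans ?_)
  rw [sum_congr rfl fun q _ => (hreg q).2.1, sum_const, smul_eq_mul, mul_comm]

lemma card_layer_add_two_le (hA : ∀ u v, Adj u v ≤ 1) (hreg : IsTotallyRegular Adj r z)
    (u : V) (i : ℕ) :
    #(layer Adj u (i + 2)) ≤ (r + z - 1) * #(layer Adj u (i + 1)) + z * #(layer Adj u i) := by
  have hcover : layer Adj u (i + 2) ⊆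
      (layer Adj u (i + 1)).biUnion fun p => layer Adj u (i + 2) ∩ outNeighbors Adj p := by
    intro w hw
    obtain ⟨p, hp, hpw⟩ := exists_mem_layer_adj_of_mem_layer_succ hw
    exact mem_biUnion.mpr ⟨p, hp, mem_inter.mpr ⟨hw, hpw⟩⟩
  calc #(layer Adj u (i + 2))
      ≤ ∑ p ∈ layer Adj u (i + 1), #(layer Adj u (i + 2) ∩ outNeighbors Adj p) :=
        (card_le_card hcover).trans card_biUnion_le
    _ ≤ ∑ p ∈ layer Adj u (i + 1),
          (r + z - 1 + if Disjoint (layer Adj u i) (outNeighbors Adj p) then 1 else 0) :=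
        sum_le_sum fun p _ => card_layer_add_two_inter_outNeighbors_le hA hreg i
    _ = (r + z - 1) * #(layer Adj u (i + 1)) +
          #{p ∈ layer Adj u (i + 1) | Disjoint (layer Adj u i) (outNeighbors Adj p)} := by
        rw [sum_add_distrib, sum_const, smul_eq_mul, mul_comm, card_filter]
    _ ≤ (r + z - 1) * #(layer Adj u (i + 1)) + z * #(layer Adj u i) :=
        Nat.add_le_add_left (card_filter_layer_succ_disjoint_le hA hreg u i) _

lemma card_layer_le_mooreSeq (hA : ∀ u v, Adj u v ≤ 1) (hreg : IsTotallyRegular Adj r z)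
    (u : V) : ∀ i, #(layer Adj u i) ≤ mooreSeq r z i
  | 0 => by simp [layer_zero, mooreSeq]
  | 1 => card_layer_one_le hA hreg u
  | i + 2 => (card_layer_add_two_le hA hreg u i).trans <| by
    rw [mooreSeq]
    gcongr
    exacts [card_layer_le_mooreSeq hA hreg u (i + 1), card_layer_le_mooreSeq hA hreg u i]

end MixedGraph

section Bipartite

variable {V : Type*} [Fintype V] {Adj : Matrix V V ℕ} {c : V → Bool}

lemma card_color_eq_card_color_ne (hc : ∀ u v, Adj u v ≠ 0 → c u ≠ c v) {r z : ℕ}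
    (hreg : IsTotallyRegular Adj r z) (hz : z ≠ 0) (b : Bool) :
    #{w | c w = b} = #{w | c w ≠ b} := by
  classical
  refine Nat.eq_of_mul_eq_mul_right (Nat.pos_of_ne_zero hz)
    (card_mul_eq_card_mul (fun p w => Adj p w = 1 ∧ Adj w p = 0) (fun p hp => ?_) fun w hw => ?_)
  · rw [← (hreg p).2.1, bipartiteAbove]
    congr 1
    ext w
    simp only [mem_filter, mem_univ, true_and] at hp ⊢
    refine and_iff_right_of_imp fun harc => ?_
    rw [← hp]
    exact (hc p w (by omega)).symm
  · rw [← (hreg w).2.2, bipartiteBelow]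
    congr 1
    ext p
    simp only [mem_filter, mem_univ, true_and] at hw ⊢
    refine and_iff_right_of_imp fun harc => ?_
    have hcolor := hc p w (by omega)
    revert hw hcolor
    cases c p <;> cases c w <;> cases b <;> simp

variable [DecidableEq V]

lemma color_eq_iff_even (hc : ∀ u v, Adj u v ≠ 0 → c u ≠ c v) {u w : V} {i : ℕ}
    (h : 0 < (Adj ^ i) u w) : c w = c u ↔ Even i := by
  induction i generalizing w with
  | zero =>
    have : u = w := by simpa [Matrix.one_apply, apply_ite] using h
    simp [this]
  | succ i ih =>
    obtain ⟨q, hq, hqw⟩ := (pow_succ_apply_pos_iff i u w).mp h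
    have hcolor : c q ≠ c w := hc q w hqw.ne'
    rw [Nat.even_add_one, ← ih hq]
    revert hcolor
    cases c q <;> cases c u <;> cases c w <;> simp

lemma exists_mem_layer_of_diamAtMost {k : ℕ} (hdiam : DiamAtMost Adj k) (u w : V) :
    ∃ i ≤ k, w ∈ layer Adj u i := by
  obtain ⟨i, hi, hpos⟩ := sum_pos_iff.mp (by simpa only [Matrix.sum_apply] using hdiam u w)
  obtain ⟨j, hji, hj⟩ := exists_mem_layer hpos
  exact ⟨j, by rw [mem_range] at hi; omega, hj⟩

theorem card_le_two_mul_sum_card_layer (hc : ∀ u v, Adj u v ≠ 0 → c u ≠ c v)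
    {r z k : ℕ} (hreg : IsTotallyRegular Adj r z) (hz : z ≠ 0) (hdiam : DiamAtMost Adj k)
    (u : V) : Fintype.card V ≤ 2 * ∑ i ∈ oppParityRange k, #(layer Adj u i) := by
  -- the colour class at distances of parity opposite to `k` from `u`
  set b := if Even k then !c u else c u
  have hcard : Fintype.card V = 2 * #{w | c w = b} := by
    rw [← card_univ, ← card_filter_add_card_filter_not (fun w => c w = b),
      ← card_color_eq_card_color_ne hc hreg hz b, two_mul]
  have hsub : ({w | c w = b} : Finset V) ⊆ (oppParityRange k).biUnion (layer Adj u) := by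
    intro w hw
    obtain ⟨i, hik, hi⟩ := exists_mem_layer_of_diamAtMost hdiam u w
    have hparity := color_eq_iff_even hc (mem_layer.mp hi).1
    rw [mem_filter_univ] at hw
    have hcolor : c w = c u ↔ Odd k := by
      rcases Nat.even_or_odd k with hk | hk
      · simp [hw, b, hk, Nat.not_odd_iff_even.mpr hk]
      · simp [hw, b, hk, Nat.not_even_iff_odd.mpr hk]
    have hi_parity : Even i ↔ Odd k := hparity.symm.trans hcolor
    exact mem_biUnion.mpr ⟨i, mem_oppParityRange.mpr ⟨hik, by grind⟩, hi⟩
  rw [hcard]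
  exact Nat.mul_le_mul_left 2 ((card_le_card hsub).trans card_biUnion_le)

end Bipartite

theorem stmt_10_general {V : Type*} [Fintype V] [DecidableEq V] [Nonempty V]
    (r z k : ℕ) (hr : 1 ≤ r) (hz : 1 ≤ z)
    (Adj : Matrix V V ℕ)
    (hmixed : IsMixedGraph Adj)
    (hreg : IsTotallyRegular Adj r z)
    (hbip : IsBipartiteMixed Adj)
    (hdiam : DiamAtMost Adj k) :
    (Fintype.card V : ℝ) ≤ mooreBoundBip r z k := by
  obtain ⟨u⟩ := ‹Nonempty V›
  obtain ⟨c, hc⟩ := hbip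
  have hcard := card_le_two_mul_sum_card_layer hc hreg (by omega) hdiam u
  have hlayer := card_layer_le_mooreSeq hmixed.1 hreg u
  rw [mooreBoundBip_eq_sum hr hz]
  exact_mod_cast hcard.trans (Nat.mul_le_mul_left 2 (sum_le_sum fun i _ => hlayer i))

theorem stmt_10 {V : Type*} [Fintype V] [DecidableEq V] [Nonempty V]
    (r z k : ℕ) (hr : 1 ≤ r) (hz : 1 ≤ z) (hk : 2 ≤ k)
    (Adj : Matrix V V ℕ)
    (hmixed : IsMixedGraph Adj)
    (hreg : IsTotallyRegular Adj r z)
    (hbip : IsBipartiteMixed Adj)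
    (hdiam : DiamAtMost Adj k) :
    (Fintype.card V : ℝ) ≤ mooreBoundBip r z k :=
  stmt_10_general r z k hr hz Adj hmixed hreg hbip hdiam
end

section
/- Let r ≥ 1, z ≥ 1 be integers with d = r + z, and let G be a bipartite mixed graph on a finite vertex set V that is totally regular with degrees (r, z), has diameter exactly 3, and has card V = 2(d² − r + 1) vertices (a mixed bipartite Moore graph of diameter 3). Then the characteristic polynomial of the real adjacency matrix of G equals (X − d)·(X + d)·(X² − (r−1))^{d² − r}; equivalently, G has spectrum {d, (√(r−1))^{d²−r}, (−√(r−1))^{d²−r}, −d}, where superscripts denote multiplicities. -/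
/-!
Color the two sides of the bipartition by `c`. Walks of odd length change color, so `A²`
vanishes between the color classes, and the diameter bound makes every off-diagonal entry of `A²`
inside a class positive. Row sums of `A²` are `d²` and its diagonal is `r`, so a class has at most
`d² - r + 1` vertices; the vertex count forces equality, and then every off-diagonal entry of `A²`
inside a class is exactly `1`: `A² = (r - 1) I + S` with `S` the same-color indicator, whose
characteristic polynomial is `(X^(d²-r) (X - (d² - r + 1)))²`. Conjugating by the `±1` diagonal
matrix of the coloring gives `χ_A = χ_{-A}`, hence `χ_A(x)² = det (x² I - A²)
= χ_S(x² - r + 1)`, and both `χ_A` and the claimed polynomial are monic square roots of the same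
polynomial.
-/

open Matrix Finset Polynomial

theorem Polynomial.Monic.eq_of_mul_self_eq {R : Type*} [CommRing R] [IsDomain R] [CharZero R]
    {p q : R[X]} (hp : p.Monic) (hq : q.Monic) (h : p * p = q * q) : p = q := by
  refine (mul_self_eq_mul_self_iff.mp h).resolve_right fun hneg => ?_
  have := hp.leadingCoeff
  rw [hneg, leadingCoeff_neg, hq.leadingCoeff] at this
  exact absurd (neg_one_eq_one_iff.mp this) (by simp)

theorem Nat.le_add_sq (r z : ℕ) : r ≤ (r + z) ^ 2 :=
  (Nat.le_self_pow two_ne_zero r).trans (Nat.pow_le_pow_left (Nat.le_add_right r z) 2)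

namespace Matrix

section Bipartite

variable {V R : Type*} [Fintype V] [DecidableEq V]

theorem charpoly_mul_charpoly_neg [CommRing R] [IsDomain R] [Infinite R] (M : Matrix V V R) :
    M.charpoly * (-M).charpoly = (M * M).charpoly.comp (X ^ 2) := by
  refine Polynomial.funext fun x => ?_
  have hcomm : Commute (scalar V x) M := scalar_commute x (fun _ => Commute.all _ _) M
  rw [eval_mul, eval_comp, eval_pow, eval_X, eval_charpoly, eval_charpoly, eval_charpoly,
    sub_neg_eq_add, ← det_mul, ← hcomm.mul_self_sub_mul_self_eq', ← map_mul, sq]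

theorem charpoly_neg_of_bipartite [CommRing R] {M : Matrix V V R} {c : V → Bool}
    (hc : ∀ u v, M u v ≠ 0 → c u ≠ c v) : (-M).charpoly = M.charpoly := by
  set D : Matrix V V R := diagonal fun v => if c v then 1 else -1
  have hDD : D * D = 1 := by
    rw [diagonal_mul_diagonal, ← diagonal_one]
    congr 1
    funext v
    cases c v <;> simp
  have hconj : D * M * D = -M := by
    ext u v
    rw [mul_diagonal, diagonal_mul, neg_apply]
    by_cases huv : M u v = 0
    · simp [huv]
    · have := hc u v huv
      cases hu : c u <;> cases hv : c v <;> simp_all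
  rw [← hconj, mul_assoc, charpoly_mul_comm, mul_assoc, hDD, mul_one]

theorem color_eq_iff_even_of_pow_apply_ne_zero [Semiring R] {M : Matrix V V R} {c : V → Bool}
    (hc : ∀ u v, M u v ≠ 0 → c u ≠ c v) {n : ℕ} {u w : V} (h : (M ^ n) u w ≠ 0) :
    c u = c w ↔ Even n := by
  induction n generalizing w with
  | zero =>
    obtain rfl : u = w := by_contra fun hne => h (by simp [one_apply_ne hne])
    simp
  | succ n ih =>
    rw [pow_succ, mul_apply] at h
    obtain ⟨v, -, hv⟩ := exists_ne_zero_of_sum_ne_zero h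
    have huv := ih (left_ne_zero_of_mul hv)
    have hvw := hc v w (right_ne_zero_of_mul hv)
    rw [Nat.even_add_one, ← huv]
    revert hvw
    cases c u <;> cases c v <;> cases c w <;> decide

theorem mul_self_apply_eq_zero_of_color_ne [Semiring R] {M : Matrix V V R} {c : V → Bool}
    (hc : ∀ u v, M u v ≠ 0 → c u ≠ c v) (u w : V) (huw : c u ≠ c w) : (M * M) u w = 0 :=
  by_contra fun hnz =>
    huw ((color_eq_iff_even_of_pow_apply_ne_zero hc (n := 2) (by rwa [sq])).2 even_two)

end Bipartite

theorem sum_mul_self_apply_of_sum_apply {V R : Type*} [Fintype V] [Semiring R]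
    {M : Matrix V V R} {d : R} (hM : ∀ u, ∑ v, M u v = d) (u : V) :
    ∑ w, (M * M) u w = d * d := by
  simp_rw [mul_apply]
  rw [sum_comm]
  simp_rw [← mul_sum, hM, ← sum_mul, hM]

def colorIndicator {V ι : Type*} [DecidableEq ι] (R : Type*) [Zero R] [One R] (c : V → ι) :
    Matrix V ι R :=
  of fun v i => if c v = i then 1 else 0

section ColorIndicator

variable {V ι R : Type*} [DecidableEq ι]

theorem colorIndicator_mul_transpose_apply [Semiring R] [Fintype ι] (c : V → ι) (u w : V) :
    (colorIndicator R c * (colorIndicator R c)ᵀ) u w = if c u = c w then 1 else 0 := by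
  simp [colorIndicator, mul_apply, eq_comm]

theorem transpose_colorIndicator_mul [Semiring R] [Fintype V] (c : V → ι) :
    (colorIndicator R c)ᵀ * colorIndicator R c = diagonal fun i => (#{v | c v = i} : R) := by
  ext i j
  simp only [colorIndicator, mul_apply, transpose_apply, of_apply, boole_mul, ← ite_and,
    sum_boole, diagonal_apply]
  split_ifs with hij
  · simp [hij]
  · simp [show ∀ v, ¬ (c v = i ∧ c v = j) from fun v h => hij (h.1.symm.trans h.2)]

theorem charpoly_colorIndicator_mul_transpose [CommRing R] [Fintype V] [DecidableEq V] [Fintype ι]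
    (c : V → ι) (h : Fintype.card ι ≤ Fintype.card V) :
    (colorIndicator R c * (colorIndicator R c)ᵀ).charpoly =
      X ^ (Fintype.card V - Fintype.card ι) * ∏ i, (X - C (#{v | c v = i} : R)) := by
  rw [charpoly_mul_comm_of_le _ _ h, transpose_colorIndicator_mul, charpoly_diagonal]

theorem charpoly_colorIndicator_mul_transpose_of_card_eq [CommRing R] [Fintype V] [DecidableEq V]
    {c : V → Bool} {m : ℕ} (h : ∀ b, #{v | c v = b} = m + 1) :
    (colorIndicator R c * (colorIndicator R c)ᵀ).charpoly =
      (X ^ m * (X - C ((m : R) + 1))) ^ 2 := by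
  have hV : Fintype.card V = 2 * (m + 1) := by
    rw [← card_univ, ← card_filter_add_card_filter_not (fun v => c v = true)]
    simp only [Bool.not_eq_true, h]
    ring
  rw [charpoly_colorIndicator_mul_transpose c (by simp [hV]), Fintype.prod_bool, h, h, hV,
    Fintype.card_bool, show 2 * (m + 1) - 2 = 2 * m by omega]
  push_cast
  ring

end ColorIndicator

end Matrix

section ColorClasses

variable {V : Type*} [Fintype V] [DecidableEq V] {M : Matrix V V ℕ} {c : V → Bool} {r k : ℕ}

theorem sum_erase_colorClass_eq (hcross : ∀ u w, c u ≠ c w → M u w = 0)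
    (hdiag : ∀ u, M u u = r) (hsum : ∀ u, ∑ w, M u w = r + k) (u : V) :
    ∑ w ∈ ({w | c w = c u} : Finset V).erase u, M u w = k := by
  have := hsum u
  rw [← sum_filter_of_ne (p := fun w => c w = c u)
      fun w _ h => by_contra fun hw => h (hcross u w (Ne.symm hw)),
    ← add_sum_erase ({w | c w = c u} : Finset V) _ (mem_filter.2 ⟨mem_univ u, rfl⟩),
    hdiag] at this
  omega

theorem one_le_of_mem_erase_colorClass (hpos : ∀ u w, u ≠ w → c u = c w → 0 < M u w)
    {u w : V} (hw : w ∈ ({w | c w = c u} : Finset V).erase u) : 1 ≤ M u w := by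
  obtain ⟨hwu, hw⟩ := mem_erase.1 hw
  exact hpos u w (Ne.symm hwu) (mem_filter.1 hw).2.symm

theorem card_colorClass_le (hcross : ∀ u w, c u ≠ c w → M u w = 0)
    (hdiag : ∀ u, M u u = r) (hpos : ∀ u w, u ≠ w → c u = c w → 0 < M u w)
    (hsum : ∀ u, ∑ w, M u w = r + k) (b : Bool) : #{v | c v = b} ≤ k + 1 := by
  obtain ⟨u, hu⟩ | hempty := ({v | c v = b} : Finset V).eq_empty_or_nonempty.symm
  · obtain rfl : c u = b := (mem_filter.1 hu).2
    have := card_nsmul_le_sum _ (M u) 1 fun w => one_le_of_mem_erase_colorClass hpos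
    rw [sum_erase_colorClass_eq hcross hdiag hsum, smul_eq_mul, mul_one,
      card_erase_of_mem hu] at this
    omega
  · simp [hempty]

omit [DecidableEq V] in
theorem card_colorClass_eq {m : ℕ} (h : ∀ b, #{v | c v = b} ≤ m)
    (hV : Fintype.card V = 2 * m) (b : Bool) : #{v | c v = b} = m := by
  have := card_filter_add_card_filter_not (s := univ) (fun v => c v = b)
  simp only [← Bool.eq_not, card_univ] at this
  have := h b
  have := h (!b)
  omega

theorem apply_eq_one_of_color_eq (hcross : ∀ u w, c u ≠ c w → M u w = 0)
    (hdiag : ∀ u, M u u = r) (hpos : ∀ u w, u ≠ w → c u = c w → 0 < M u w)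
    (hsum : ∀ u, ∑ w, M u w = r + k) (hV : Fintype.card V = 2 * (k + 1))
    {u w : V} (hne : u ≠ w) (huw : c u = c w) : M u w = 1 := by
  have hcard : #(({v | c v = c u} : Finset V).erase u) = k := by
    rw [card_erase_of_mem (by simp),
      card_colorClass_eq (card_colorClass_le hcross hdiag hpos hsum) hV]
    rfl
  have hall := (sum_eq_sum_iff_of_le (f := fun _ => 1) fun v =>
    one_le_of_mem_erase_colorClass hpos).1 <| by
      rw [sum_erase_colorClass_eq hcross hdiag hsum, sum_const, hcard, smul_eq_mul, mul_one]
  exact (hall w (mem_erase.2 ⟨Ne.symm hne, mem_filter.2 ⟨mem_univ w, huw.symm⟩⟩)).symm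

end ColorClasses

section MixedGraph

variable {V : Type*} [Fintype V] {Adj : Matrix V V ℕ} {r z : ℕ}

omit [Fintype V] in
theorem IsMixedGraph.eq_zero_or_eq_one (h : IsMixedGraph Adj) (u v : V) :
    Adj u v = 0 ∨ Adj u v = 1 := by
  have := h.1 u v
  omega

theorem IsTotallyRegular.sum_apply (h : IsTotallyRegular Adj r z) (hA : IsMixedGraph Adj)
    (u : V) : ∑ v, Adj u v = r + z := by
  rw [← (h u).1, ← (h u).2.1, card_filter, card_filter, ← sum_add_distrib]
  refine sum_congr rfl fun v _ => ?_
  rcases hA.eq_zero_or_eq_one u v with huv | huv <;>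
    rcases hA.eq_zero_or_eq_one v u with hvu | hvu <;> simp [huv, hvu]

theorem IsTotallyRegular.mul_self_apply_self (h : IsTotallyRegular Adj r z)
    (hA : IsMixedGraph Adj) (u : V) : (Adj * Adj) u u = r := by
  rw [mul_apply, ← (h u).1, card_filter]
  refine sum_congr rfl fun v _ => ?_
  rcases hA.eq_zero_or_eq_one u v with huv | huv <;>
    rcases hA.eq_zero_or_eq_one v u with hvu | hvu <;> simp [huv, hvu]

theorem IsTotallyRegular.sum_mul_self_apply (h : IsTotallyRegular Adj r z)
    (hA : IsMixedGraph Adj) (u : V) : ∑ w, (Adj * Adj) u w = r + ((r + z) ^ 2 - r) := by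
  rw [sum_mul_self_apply_of_sum_apply (h.sum_apply hA) u, ← sq,
    Nat.add_sub_cancel' (Nat.le_add_sq r z)]

variable [DecidableEq V] {c : V → Bool}

theorem DiamAtMost.mul_self_apply_pos (h : DiamAtMost Adj 3)
    (hc : ∀ u v, Adj u v ≠ 0 → c u ≠ c v) (u w : V) (hne : u ≠ w) (huw : c u = c w) :
    0 < (Adj * Adj) u w := by
  have hodd : ∀ n, Odd n → (Adj ^ n) u w = 0 := fun n hn => by_contra fun hnz =>
    Nat.not_even_iff_odd.2 hn ((color_eq_iff_even_of_pow_apply_ne_zero hc hnz).1 huw)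
  have := h u w
  simp only [Matrix.sum_apply, sum_range_succ, sum_range_zero, pow_zero, one_apply_ne hne,
    hodd 1 odd_one, hodd 3 (by decide), sq] at this
  omega

theorem card_colorClass_eq_of_diamAtMost_three (hA : IsMixedGraph Adj)
    (hreg : IsTotallyRegular Adj r z) (hc : ∀ u v, Adj u v ≠ 0 → c u ≠ c v)
    (hdiam : DiamAtMost Adj 3) (hcard : Fintype.card V = 2 * ((r + z) ^ 2 - r + 1)) (b : Bool) :
    #{v | c v = b} = (r + z) ^ 2 - r + 1 :=
  card_colorClass_eq (card_colorClass_le (mul_self_apply_eq_zero_of_color_ne hc)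
    (hreg.mul_self_apply_self hA) (hdiam.mul_self_apply_pos hc) (hreg.sum_mul_self_apply hA))
    hcard b

theorem mul_self_apply_eq_of_diamAtMost_three (hA : IsMixedGraph Adj)
    (hreg : IsTotallyRegular Adj r z) (hc : ∀ u v, Adj u v ≠ 0 → c u ≠ c v)
    (hdiam : DiamAtMost Adj 3) (hcard : Fintype.card V = 2 * ((r + z) ^ 2 - r + 1)) (u w : V) :
    (Adj * Adj) u w = if u = w then r else if c u = c w then 1 else 0 := by
  split_ifs with hne huw
  · subst hne; exact hreg.mul_self_apply_self hA u
  · exact apply_eq_one_of_color_eq (mul_self_apply_eq_zero_of_color_ne hc)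
      (hreg.mul_self_apply_self hA) (hdiam.mul_self_apply_pos hc) (hreg.sum_mul_self_apply hA)
      hcard hne huw
  · exact mul_self_apply_eq_zero_of_color_ne hc u w huw

theorem map_natCast_mul_self_eq_of_diamAtMost_three (hA : IsMixedGraph Adj)
    (hreg : IsTotallyRegular Adj r z) (hc : ∀ u v, Adj u v ≠ 0 → c u ≠ c v)
    (hdiam : DiamAtMost Adj 3) (hcard : Fintype.card V = 2 * ((r + z) ^ 2 - r + 1)) :
    Adj.map (fun n => (n : ℝ)) * Adj.map (fun n => (n : ℝ)) =
      colorIndicator ℝ c * (colorIndicator ℝ c)ᵀ - scalar V (1 - (r : ℝ)) := by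
  ext u w
  have hcast : (Adj.map (fun n => (n : ℝ)) * Adj.map (fun n => (n : ℝ))) u w =
      ((Adj * Adj) u w : ℝ) := by
    simp [mul_apply]
  rw [hcast, mul_self_apply_eq_of_diamAtMost_three hA hreg hc hdiam hcard,
    Matrix.sub_apply, colorIndicator_mul_transpose_apply, scalar_apply, diagonal_apply]
  split_ifs <;> simp_all

end MixedGraph

open Polynomial in
theorem stmt_12_general {V : Type*} [Fintype V] [DecidableEq V]
    (r z d : ℕ) (hd : d = r + z)
    (Adj : Matrix V V ℕ)
    (hmixed : IsMixedGraph Adj)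
    (hreg : IsTotallyRegular Adj r z)
    (hbip : IsBipartiteMixed Adj)
    (hdiam : DiamExactly Adj 3)
    (hcard : Fintype.card V = 2 * (d^2 - r + 1)) :
    (Adj.map fun n => (n : ℝ)).charpoly =
      (X - C (d : ℝ)) * (X + C (d : ℝ)) * (X^2 - C ((r : ℝ) - 1)) ^ (d^2 - r) := by
  obtain ⟨c, hc⟩ := hbip
  subst hd
  set k := (r + z) ^ 2 - r
  set B : Matrix V V ℝ := Adj.map fun n => (n : ℝ)
  have hS := charpoly_colorIndicator_mul_transpose_of_card_eq (R := ℝ)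
    (card_colorClass_eq_of_diamAtMost_three hmixed hreg hc hdiam.1 hcard)
  have hfac : (X ^ 2 + C (1 - (r : ℝ)) - C ((k : ℝ) + 1) : ℝ[X]) =
      (X - C ((r + z : ℕ) : ℝ)) * (X + C ((r + z : ℕ) : ℝ)) := by
    have hk := congrArg C (congrArg (Nat.cast (R := ℝ)) (Nat.add_sub_cancel' (Nat.le_add_sq r z)))
    simp only [Nat.cast_add, Nat.cast_pow, map_sub, map_add, map_one, map_pow] at hk ⊢
    linear_combination -hk
  refine (charpoly_monic B).eq_of_mul_self_eq (by monicity!) ?_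
  calc B.charpoly * B.charpoly = (B * B).charpoly.comp (X ^ 2) := by
        rw [← charpoly_mul_charpoly_neg, charpoly_neg_of_bipartite (c := c)]
        exact fun u v h => hc u v (by simpa [B] using h)
    _ = ((X ^ k * (X - C ((k : ℝ) + 1))) ^ 2).comp (X ^ 2 + C (1 - (r : ℝ))) := by
        rw [map_natCast_mul_self_eq_of_diamAtMost_three hmixed hreg hc hdiam.1 hcard,
          charpoly_sub_scalar, comp_assoc, hS, add_comp, X_comp, C_comp]
    _ = _ := by
        rw [pow_comp, mul_comp, pow_comp, sub_comp, X_comp, C_comp, hfac, ← sub_neg_eq_add,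
          ← C_neg, neg_sub]
        ring

open Polynomial in
theorem stmt_12 {V : Type*} [Fintype V] [DecidableEq V] [Nonempty V]
    (r z d : ℕ) (hr : 1 ≤ r) (hz : 1 ≤ z) (hd : d = r + z)
    (Adj : Matrix V V ℕ)
    (hmixed : IsMixedGraph Adj)
    (hreg : IsTotallyRegular Adj r z)
    (hbip : IsBipartiteMixed Adj)
    (hdiam : DiamExactly Adj 3)
    (hcard : Fintype.card V = 2 * (d^2 - r + 1)) :
    (Adj.map fun n => (n : ℝ)).charpoly =
      (X - C (d : ℝ)) * (X + C (d : ℝ)) * (X^2 - C ((r : ℝ) - 1)) ^ (d^2 - r) :=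
  stmt_12_general r z d hd Adj hmixed hreg hbip hdiam hcard
end

section
/- For every integer z ≥ 1, setting d = z + 1, there exists a bipartite mixed graph on a finite vertex set V that is totally regular with degrees (1, z), has diameter exactly 3, and has card V = 2d² vertices; that is, Moore bipartite mixed graphs with diameter k = 3 and r = 1 exist for every value of z ≥ 1 (attaining the Moore bound M_B(1, z, 3) = 2(d² − 1 + 1) = 2d²). -/
open Finset Matrix

theorem Matrix.mul_apply_pos_of_pos {l m n : Type*} [Fintype m] {A : Matrix l m ℕ}
    {B : Matrix m n ℕ} {i : l} {k : n} (j : m) (hA : 0 < A i j) (hB : 0 < B j k) :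
    0 < (A * B) i k :=
  (Nat.mul_pos hA hB).trans_le <|
    single_le_sum (f := fun j => A i j * B j k) (fun _ _ => Nat.zero_le _) (mem_univ j)

section MixedGraph

variable {V W : Type*}

theorem IsMixedGraph.submatrix {A : Matrix V V ℕ} (hA : IsMixedGraph A) (f : W → V) :
    IsMixedGraph (A.submatrix f f) :=
  ⟨fun u v => hA.1 (f u) (f v), fun u => hA.2 (f u)⟩

theorem IsBipartiteMixed.submatrix {A : Matrix V V ℕ} (hA : IsBipartiteMixed A) (f : W → V) :
    IsBipartiteMixed (A.submatrix f f) :=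
  let ⟨c, hc⟩ := hA
  ⟨c ∘ f, fun u v => hc (f u) (f v)⟩

variable [Fintype V] [Fintype W]

theorem IsTotallyRegular.reindex {A : Matrix V V ℕ} {r z : ℕ} (hA : IsTotallyRegular A r z)
    (e : V ≃ W) : IsTotallyRegular (reindex e e A) r z := by
  intro u
  obtain ⟨hr, hout, hin⟩ := hA (e.symm u)
  refine ⟨(card_equiv e.symm fun v => ?_).trans hr, (card_equiv e.symm fun v => ?_).trans hout,
    (card_equiv e.symm fun v => ?_).trans hin⟩ <;>
  rw [mem_filter, mem_filter] <;> simp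

variable [DecidableEq V] [DecidableEq W]

theorem sum_range_pow_reindex (A : Matrix V V ℕ) (e : V ≃ W) (n : ℕ) :
    ∑ i ∈ range n, reindex e e A ^ i = reindex e e (∑ i ∈ range n, A ^ i) := by
  simp only [← coe_reindexAlgEquiv ℕ ℕ, map_sum, map_pow]

theorem DiamExactly.reindex {A : Matrix V V ℕ} {k : ℕ} (hA : DiamExactly A k) (e : V ≃ W) :
    DiamExactly (reindex e e A) k := by
  obtain ⟨hle, u, v, huv⟩ := hA
  refine ⟨fun u v => ?_, e u, e v, ?_⟩
  · rw [sum_range_pow_reindex]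
    exact hle _ _
  · rw [sum_range_pow_reindex, reindex_apply, submatrix_apply]
    simpa using huv

theorem diamAtMost_of_pow_pos {A : Matrix V V ℕ} {k : ℕ}
    (h : ∀ u v, ∃ i ≤ k, 0 < (A ^ i) u v) : DiamAtMost A k := by
  intro u v
  obtain ⟨i, hik, hi⟩ := h u v
  rw [Matrix.sum_apply]
  exact hi.trans_le (single_le_sum (f := fun i => (A ^ i) u v) (fun _ _ => Nat.zero_le _)
    (mem_range.2 (Nat.lt_succ_of_le hik)))

end MixedGraph

/-- The vertex `(s, x, y)` is the word `xy` on side `s`; it points to every `yz` on the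
other side. -/
def bipartiteDeBruijn (d : ℕ) : Matrix (Bool × Fin d × Fin d) (Bool × Fin d × Fin d) ℕ :=
  Matrix.of fun u v => if u.1 ≠ v.1 ∧ u.2.2 = v.2.1 then 1 else 0

namespace bipartiteDeBruijn

variable {d : ℕ}

theorem apply_eq_one_iff (u v : Bool × Fin d × Fin d) :
    bipartiteDeBruijn d u v = 1 ↔ u.1 ≠ v.1 ∧ u.2.2 = v.2.1 := by
  simp [bipartiteDeBruijn]

theorem apply_eq_zero_iff (u v : Bool × Fin d × Fin d) :
    bipartiteDeBruijn d u v = 0 ↔ ¬(u.1 ≠ v.1 ∧ u.2.2 = v.2.1) := by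
  simp [bipartiteDeBruijn]

theorem isMixedGraph : IsMixedGraph (bipartiteDeBruijn d) := by
  refine ⟨fun u v => ?_, fun u => by simp [bipartiteDeBruijn]⟩
  simp only [bipartiteDeBruijn, of_apply]
  split_ifs <;> simp

theorem isBipartiteMixed : IsBipartiteMixed (bipartiteDeBruijn d) :=
  ⟨Prod.fst, fun u v h huv => h ((apply_eq_zero_iff u v).2 fun h' => h'.1 huv)⟩

theorem isTotallyRegular : IsTotallyRegular (bipartiteDeBruijn d) 1 (d - 1) := by
  rintro ⟨s, x, y⟩
  refine ⟨?_, ?_, ?_⟩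
  · rw [card_eq_one]
    refine ⟨(!s, y, x), ?_⟩
    ext ⟨t, a, b⟩
    rw [mem_filter, apply_eq_one_iff, apply_eq_one_iff]
    cases s <;> cases t <;> simp <;> tauto
  · have : univ.filter (fun v => bipartiteDeBruijn d (s, x, y) v = 1 ∧
        bipartiteDeBruijn d v (s, x, y) = 0) = {!s} ×ˢ ({y} ×ˢ univ.erase x) := by
      ext ⟨t, a, b⟩
      rw [mem_filter, apply_eq_one_iff, apply_eq_zero_iff]
      cases s <;> cases t <;> simp <;> tauto
    simp [this]
  · have : univ.filter (fun v => bipartiteDeBruijn d v (s, x, y) = 1 ∧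
        bipartiteDeBruijn d (s, x, y) v = 0) = {!s} ×ˢ (univ.erase y ×ˢ {x}) := by
      ext ⟨t, a, b⟩
      rw [mem_filter, apply_eq_one_iff, apply_eq_zero_iff]
      cases s <;> cases t <;> simp <;> tauto
    simp [this]

theorem sq_apply (u v : Bool × Fin d × Fin d) :
    (bipartiteDeBruijn d ^ 2) u v = if u.1 = v.1 then 1 else 0 := by
  obtain ⟨s, x, y⟩ := u
  obtain ⟨t, a, b⟩ := v
  rw [sq, mul_apply, sum_eq_single (!s, y, a)]
  · cases s <;> cases t <;> simp [bipartiteDeBruijn]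
  · rintro ⟨r, p, q⟩ - hne
    cases s <;> cases r <;> simp [bipartiteDeBruijn] at hne ⊢ <;> grind
  · simp

theorem pow_three_apply_pos {u v : Bool × Fin d × Fin d} (h : u.1 ≠ v.1) :
    0 < (bipartiteDeBruijn d ^ 3) u v := by
  rw [pow_succ']
  refine mul_apply_pos_of_pos (v.1, u.2.2, u.2.2) ?_ ?_
  · simp [bipartiteDeBruijn, h]
  · simp [sq_apply]

theorem diamExactly_three (hd : 2 ≤ d) : DiamExactly (bipartiteDeBruijn d) 3 := by
  refine ⟨diamAtMost_of_pow_pos fun u v => ?_, (false, ⟨0, by omega⟩, ⟨0, by omega⟩),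
    (true, ⟨1, by omega⟩, ⟨0, by omega⟩), ?_⟩
  · by_cases h : u.1 = v.1
    · exact ⟨2, by norm_num, by simp [sq_apply, h]⟩
    · exact ⟨3, le_rfl, pow_three_apply_pos h⟩
  · simp only [sum_range_succ, range_one, sum_singleton, Matrix.add_apply, sq_apply]
    simp [bipartiteDeBruijn, one_apply]

end bipartiteDeBruijn

theorem stmt_14 (z : ℕ) (hz : 1 ≤ z) :
    ∃ Adj : Matrix (Fin (2 * (z + 1)^2)) (Fin (2 * (z + 1)^2)) ℕ,
      IsMixedGraph Adj ∧ IsTotallyRegular Adj 1 z ∧ IsBipartiteMixed Adj ∧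
      DiamExactly Adj 3 := by
  have hcard : Fintype.card (Bool × Fin (z + 1) × Fin (z + 1)) = 2 * (z + 1) ^ 2 := by
    simp [sq]
  let e := Fintype.equivFinOfCardEq hcard
  refine ⟨reindex e e (bipartiteDeBruijn (z + 1)), bipartiteDeBruijn.isMixedGraph.submatrix _,
    ?_, bipartiteDeBruijn.isBipartiteMixed.submatrix _,
    (bipartiteDeBruijn.diamExactly_three (by omega)).reindex e⟩
  simpa using bipartiteDeBruijn.isTotallyRegular.reindex e
end

section
/- There exist two bipartite mixed graphs G and G', each on 8 vertices, each totally regular with degrees (1, 1) and of diameter exactly 3 (hence each attaining the Moore bound M_B(1,1,3) = 2(2² − 1 + 1) = 8), such that G and G' are not isomorphic (there is no bijection σ of the vertex sets with A'(σu)(σv) = A(u)(v) for all u, v). -/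
/-!
Both graphs consist of the edges `{i, i + 4}` together with arcs forming two directed 4-cycles
`0 → 5 → 3 → 6 → 0`, `1 → 4 → 2 → 7 → 1` (first graph) resp. one directed 8-cycle
`0 → 5 → 2 → 7 → 1 → 4 → 3 → 6 → 0` (second graph); `{0, 1, 2, 3}` and `{4, 5, 6, 7}` are the colour
classes, and regularity and diameter are finite computations. An isomorphism carries
out-neighbourhoods to out-neighbourhoods, so the number of distinct rows of the adjacency matrix is
an invariant; it is 4 for the first graph and 6 for the second.
-/

open Finset

-- Instance search does not unfold `Matrix` when matching entries `M i j` under binders, so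
-- `decide` needs these to decide statements about matrix entries.
instance Matrix.decidableEntryLE {m n α : Type*} [LE α] [DecidableLE α] (M : Matrix m n α)
    (i : m) (j : n) (a : α) : Decidable (M i j ≤ a) :=
  inferInstanceAs (Decidable (_ ≤ a))

instance Matrix.decidableLTEntry {m n α : Type*} [LT α] [DecidableLT α] (M : Matrix m n α)
    (i : m) (j : n) (a : α) : Decidable (a < M i j) :=
  inferInstanceAs (Decidable (a < _))

instance Matrix.decidableEntryEq {m n α : Type*} [DecidableEq α] (M : Matrix m n α)
    (i : m) (j : n) (a : α) : Decidable (M i j = a) :=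
  inferInstanceAs (Decidable (_ = a))

theorem card_image_rows_eq_of_iso {V W α : Type*} [Fintype V] [Fintype W] [DecidableEq (V → α)]
    [DecidableEq (W → α)] {A : V → V → α} {B : W → W → α} (σ : V ≃ W)
    (hσ : ∀ u v, B (σ u) (σ v) = A u v) :
    (univ.image B).card = (univ.image A).card := by
  have hrow : ∀ u, B (σ u) = σ.arrowCongr (Equiv.refl α) (A u) := fun u =>
    funext fun w => by simp [← hσ]
  have himage : univ.image B = (univ.image A).image (σ.arrowCongr (Equiv.refl α)) := by
    ext r
    simp only [image_image, mem_image, mem_univ, true_and, σ.surjective.exists, hrow,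
      Function.comp_apply]
  rw [himage, card_image_of_injective _ (Equiv.injective _)]

def mixedMooreGraph₁ : Matrix (Fin 8) (Fin 8) ℕ :=
  !![0,0,0,0,1,1,0,0; 0,0,0,0,1,1,0,0; 0,0,0,0,0,0,1,1; 0,0,0,0,0,0,1,1;
     1,0,1,0,0,0,0,0; 0,1,0,1,0,0,0,0; 1,0,1,0,0,0,0,0; 0,1,0,1,0,0,0,0]

def mixedMooreGraph₂ : Matrix (Fin 8) (Fin 8) ℕ :=
  !![0,0,0,0,1,1,0,0; 0,0,0,0,1,1,0,0; 0,0,0,0,0,0,1,1; 0,0,0,0,0,0,1,1;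
     1,0,0,1,0,0,0,0; 0,1,1,0,0,0,0,0; 1,0,1,0,0,0,0,0; 0,1,0,1,0,0,0,0]

theorem mixedMooreGraph₁_spec :
    IsMixedGraph mixedMooreGraph₁ ∧ IsTotallyRegular mixedMooreGraph₁ 1 1 ∧
      IsBipartiteMixed mixedMooreGraph₁ ∧ DiamExactly mixedMooreGraph₁ 3 := by
  refine ⟨by unfold IsMixedGraph; decide, by unfold IsTotallyRegular; decide,
    ⟨fun v => decide (v.val < 4), by decide⟩, by unfold DiamExactly DiamAtMost; decide⟩

theorem mixedMooreGraph₂_spec :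
    IsMixedGraph mixedMooreGraph₂ ∧ IsTotallyRegular mixedMooreGraph₂ 1 1 ∧
      IsBipartiteMixed mixedMooreGraph₂ ∧ DiamExactly mixedMooreGraph₂ 3 := by
  refine ⟨by unfold IsMixedGraph; decide, by unfold IsTotallyRegular; decide,
    ⟨fun v => decide (v.val < 4), by decide⟩, by unfold DiamExactly DiamAtMost; decide⟩

theorem mixedMooreGraph_not_iso :
    ¬ ∃ σ : Fin 8 ≃ Fin 8, ∀ u v, mixedMooreGraph₂ (σ u) (σ v) = mixedMooreGraph₁ u v := by
  rintro ⟨σ, hσ⟩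
  have hcard := card_image_rows_eq_of_iso σ hσ
  revert hcard
  decide

theorem stmt_15 :
    ∃ Adj Adj' : Matrix (Fin 8) (Fin 8) ℕ,
      (IsMixedGraph Adj ∧ IsTotallyRegular Adj 1 1 ∧ IsBipartiteMixed Adj ∧
        DiamExactly Adj 3) ∧
      (IsMixedGraph Adj' ∧ IsTotallyRegular Adj' 1 1 ∧ IsBipartiteMixed Adj' ∧
        DiamExactly Adj' 3) ∧
      ¬ ∃ σ : Fin 8 ≃ Fin 8, ∀ u v : Fin 8, Adj' (σ u) (σ v) = Adj u v :=
  ⟨mixedMooreGraph₁, mixedMooreGraph₂, mixedMooreGraph₁_spec, mixedMooreGraph₂_spec,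
    mixedMooreGraph_not_iso⟩
end

section
/- There exists a bipartite mixed graph on 12 vertices that is totally regular with degrees (1, 1) and has diameter exactly 4; since M_B(1,1,4) = 2(d³ − d² + (z − r + 1)d + r) = 14 for r = z = 1, d = 2, this is a mixed bipartite almost Moore graph, i.e., it has M_B(1,1,4) − 2 vertices. -/
/-! The witness has parts `{0,…,5}` and `{6,…,11}`, the perfect matching `i — i + 6` as its
edges, and arcs chosen so that every vertex has one out- and one in-arc. Every property is a
finite check on its adjacency matrix that the kernel evaluates; in particular `3` is at
distance `4` from `0`, so the diameter is not `3`. -/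

section AlmostMooreGraph

variable {m n : Type*} (A : Matrix m n ℕ) (i : m) (j : n) (k : ℕ)

/- `Matrix` is not reducible, so instance search does not see `A i j` as a natural number
and `decide` cannot evaluate statements about the entries without these. -/
local instance : Decidable (A i j = k) := Nat.decEq _ _
local instance : Decidable (A i j ≤ k) := Nat.decLe _ _
local instance : Decidable (k < A i j) := Nat.decLt _ _

def almostMooreAdj : Matrix (Fin 12) (Fin 12) ℕ :=
  !![0, 0, 0, 0, 0, 0, 1, 1, 0, 0, 0, 0;
     0, 0, 0, 0, 0, 0, 1, 1, 0, 0, 0, 0;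
     0, 0, 0, 0, 0, 0, 0, 0, 1, 1, 0, 0;
     0, 0, 0, 0, 0, 0, 0, 0, 1, 1, 0, 0;
     0, 0, 0, 0, 0, 0, 0, 0, 0, 0, 1, 1;
     0, 0, 0, 0, 0, 0, 0, 0, 0, 0, 1, 1;
     1, 0, 1, 0, 0, 0, 0, 0, 0, 0, 0, 0;
     0, 1, 0, 0, 1, 0, 0, 0, 0, 0, 0, 0;
     1, 0, 1, 0, 0, 0, 0, 0, 0, 0, 0, 0;
     0, 0, 0, 1, 0, 1, 0, 0, 0, 0, 0, 0;
     0, 1, 0, 0, 1, 0, 0, 0, 0, 0, 0, 0;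
     0, 0, 0, 1, 0, 1, 0, 0, 0, 0, 0, 0]

theorem isMixedGraph_almostMooreAdj : IsMixedGraph almostMooreAdj :=
  ⟨by decide, by decide⟩

theorem isTotallyRegular_almostMooreAdj : IsTotallyRegular almostMooreAdj 1 1 := by
  unfold IsTotallyRegular
  decide

theorem isBipartiteMixed_almostMooreAdj : IsBipartiteMixed almostMooreAdj :=
  ⟨fun v => decide (v.val < 6), by decide⟩

theorem diamExactly_almostMooreAdj : DiamExactly almostMooreAdj 4 := by
  refine ⟨?_, 0, 3, by decide⟩
  unfold DiamAtMost
  decide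

end AlmostMooreGraph

theorem stmt_19 :
    (∃ Adj : Matrix (Fin 12) (Fin 12) ℕ,
      IsMixedGraph Adj ∧ IsTotallyRegular Adj 1 1 ∧ IsBipartiteMixed Adj ∧
      DiamExactly Adj 4) ∧
    (12 : ℕ) = 2 * (2^3 - 2^2 + (1 - 1 + 1) * 2 + 1) - 2 :=
  ⟨⟨almostMooreAdj, isMixedGraph_almostMooreAdj, isTotallyRegular_almostMooreAdj,
      isBipartiteMixed_almostMooreAdj, diamExactly_almostMooreAdj⟩, by norm_num⟩
end
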